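/- Let c_{n-1}^{(n)} denote the leading coefficient of the polynomial P_n of degree n-1 with B_n^(m) = P_n(m). Then the recurrence c_{n-1}^{(n)} = (n/2) · c_{n-2}^{(n-1)} holds for n ≥ 2, with initial value c_0^{(1)} = 1. -/
import Mathlib


/-- Stirling numbers of the second kind. -/
def stirling : ℕ → ℕ → ℕ
  | 0, 0 => 1
  | 0, _ + 1 => 0
  | _ + 1, 0 => 0
  | n + 1, k + 1 => (k + 1) * stirling n (k + 1) + stirling n k

/-- Higher order Bell numbers: `higherBell m n` is `B_n^(m)`. -/
def higherBell : ℕ → ℕ → ℕ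
  | 0, _ => 1
  | _ + 1, 0 => 1
  | m + 1, n + 1 => ∑ k ∈ Finset.Icc 1 (n + 1), higherBell m k * stirling (n + 1) k

lemma stirling_eq_zero : ∀ n k, n < k → stirling n k = 0
  | 0, _ + 1, _ => rfl
  | n + 1, k + 1, h => by
      rw [stirling, stirling_eq_zero n (k + 1) (by omega), stirling_eq_zero n k (by omega)]
      ring

lemma stirling_self : ∀ n, stirling n n = 1
  | 0 => rfl
  | n + 1 => by
      rw [stirling, stirling_eq_zero n (n + 1) (by omega), stirling_self n]
      ring

lemma stirling_succ_self : ∀ n, stirling (n + 1) n = (n + 1).choose 2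
  | 0 => rfl
  | n + 1 => by
      rw [stirling, stirling_self (n + 1), stirling_succ_self n,
        Nat.choose_succ_succ (n + 1) 1, Nat.choose_one_right]
      ring

lemma stirling_pos : ∀ n k, 1 ≤ k → k ≤ n → 0 < stirling n k := by
  intro n
  induction n with
  | zero => omega
  | succ n ih =>
    rintro (_ | k) h1 h2
    · omega
    rw [stirling]
    rcases Nat.lt_or_ge k 1 with hk | hk
    · -- k = 0, so we look at stirling n 1 or n = 0
      interval_cases k
      rcases Nat.eq_zero_or_pos n with rfl | hn
      · simp [stirling]
      · have := ih 1 le_rfl hn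
        positivity
    · have := ih k hk (by omega)
      positivity

lemma higherBell_one : ∀ m, higherBell m 1 = 1
  | 0 => rfl
  | m + 1 => by
      rw [higherBell]
      simp [higherBell_one m, stirling_self]

private lemma sum_Icc_top {M : Type*} [AddCommMonoid M] (a b : ℕ) (h : a ≤ b + 1) (f : ℕ → M) :
    ∑ k ∈ Finset.Icc a (b + 1), f k = (∑ k ∈ Finset.Icc a b, f k) + f (b + 1) := by
  rw [← Finset.insert_Icc_right_eq_Icc_add_one h, Finset.sum_insert (by simp), add_comm]

/-- A rational polynomial nonnegative at all naturals has nonnegative leading coefficient. -/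
lemma leadingCoeff_nonneg_of_nat (G : Polynomial ℚ) (h : ∀ m : ℕ, 0 ≤ G.eval (m : ℚ)) :
    0 ≤ G.leadingCoeff := by
  by_contra hneg
  push_neg at hneg
  have hdeg : 0 < G.degree := by
    by_contra hd
    push_neg at hd
    have hC := Polynomial.eq_C_of_degree_le_zero hd
    have h0 := h 0
    rw [hC] at h0 hneg
    simp only [Polynomial.eval_C, Nat.cast_zero] at h0
    rw [Polynomial.leadingCoeff_C] at hneg
    linarith
  have htend := Polynomial.tendsto_atBot_of_leadingCoeff_nonpos G hdeg hneg.le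
  have h2 : ∀ᶠ m : ℕ in Filter.atTop, G.eval (m : ℚ) < 0 :=
    (htend.comp tendsto_natCast_atTop_atTop).eventually (Filter.eventually_lt_atBot 0)
  obtain ⟨m, hm⟩ := h2.exists
  exact absurd (h m) (not_le.mpr hm)

lemma coeff_comp_X_add_one (P : Polynomial ℚ) (k : ℕ) :
    (P.comp (Polynomial.X + 1)).coeff k
      = ∑ e ∈ Finset.range (P.natDegree + 1), P.coeff e * (e.choose k : ℚ) := by
  conv_lhs => rw [P.as_sum_range]
  simp only [Polynomial.comp, Polynomial.eval₂_finset_sum, Polynomial.eval₂_monomial,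
    Polynomial.finset_sum_coeff, Polynomial.coeff_C_mul, Polynomial.coeff_X_add_one_pow]

theorem stmt14 :
    (∀ n : ℕ, 2 ≤ n → ∀ P Q : Polynomial ℚ,
      (∀ m : ℕ, (higherBell m n : ℚ) = P.eval (m : ℚ)) → P.natDegree = n - 1 →
      (∀ m : ℕ, (higherBell m (n - 1) : ℚ) = Q.eval (m : ℚ)) → Q.natDegree = n - 2 →
      P.leadingCoeff = (n / 2 : ℚ) * Q.leadingCoeff) ∧
    (∀ P : Polynomial ℚ,
      (∀ m : ℕ, (higherBell m 1 : ℚ) = P.eval (m : ℚ)) → P.leadingCoeff = 1) := by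
  constructor
  · intro n hn P Q hP hPd hQ hQd
    obtain ⟨d, rfl⟩ : ∃ d, n = d + 2 := ⟨n - 2, by omega⟩
    have hPd' : P.natDegree = d + 1 := hPd
    have hQd' : Q.natDegree = d := hQd
    have hQ' : ∀ m : ℕ, (higherBell m (d + 1) : ℚ) = Q.eval (m : ℚ) := hQ
    clear hPd hQd hQ
    set c : ℚ := (stirling (d + 2) (d + 1) : ℚ) with hc
    set D : Polynomial ℚ := P.comp (Polynomial.X + 1) - P - Polynomial.C c * Q with hDdef
    set E : Polynomial ℚ := Q.comp (Polynomial.X + 1) - Q with hEdef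
    -- evaluation of D
    have hD : ∀ m : ℕ, D.eval (m : ℚ)
        = ((∑ k ∈ Finset.Icc 1 d, higherBell m k * stirling (d + 2) k : ℕ) : ℚ) := by
      intro m
      have h1 : higherBell (m + 1) (d + 2)
          = (∑ k ∈ Finset.Icc 1 d, higherBell m k * stirling (d + 2) k)
            + higherBell m (d + 1) * stirling (d + 2) (d + 1)
            + higherBell m (d + 2) * stirling (d + 2) (d + 2) := by
        rw [higherBell, sum_Icc_top 1 (d + 1) (by omega), sum_Icc_top 1 d (by omega)]
      have h2 : D.eval (m : ℚ)
          = P.eval ((m : ℚ) + 1) - P.eval (m : ℚ) - c * Q.eval (m : ℚ) := by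
        simp [hDdef]
      have h3 : ((m : ℚ) + 1) = (((m + 1 : ℕ)) : ℚ) := by push_cast; ring
      rw [h2, h3, ← hP (m + 1), ← hP m, ← hQ' m, h1, stirling_self]
      push_cast
      ring
    -- evaluation of E
    have hE : ∀ m : ℕ, E.eval (m : ℚ)
        = ((∑ k ∈ Finset.Icc 1 d, higherBell m k * stirling (d + 1) k : ℕ) : ℚ) := by
      intro m
      have h1 : higherBell (m + 1) (d + 1)
          = (∑ k ∈ Finset.Icc 1 d, higherBell m k * stirling (d + 1) k)
            + higherBell m (d + 1) * stirling (d + 1) (d + 1) := by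
        rw [higherBell, sum_Icc_top 1 d (by omega)]
      have h2 : E.eval (m : ℚ) = Q.eval ((m : ℚ) + 1) - Q.eval (m : ℚ) := by
        simp [hEdef]
      have h3 : ((m : ℚ) + 1) = (((m + 1 : ℕ)) : ℚ) := by push_cast; ring
      rw [h2, h3, ← hQ' (m + 1), ← hQ' m, h1, stirling_self]
      push_cast
      ring
    -- the bound
    set Cn : ℕ := ∑ k ∈ Finset.Icc 1 d, stirling (d + 2) k with hCn
    have hbound : ∀ m : ℕ,
        (∑ k ∈ Finset.Icc 1 d, higherBell m k * stirling (d + 2) k)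
          ≤ Cn * ∑ k ∈ Finset.Icc 1 d, higherBell m k * stirling (d + 1) k := by
      intro m
      rw [Finset.mul_sum]
      apply Finset.sum_le_sum
      intro k hk
      simp only [Finset.mem_Icc] at hk
      have hs1 : stirling (d + 2) k ≤ Cn :=
        Finset.single_le_sum (f := fun k => stirling (d + 2) k) (fun _ _ => Nat.zero_le _)
          (Finset.mem_Icc.mpr hk)
      have hs2 : 1 ≤ stirling (d + 1) k := stirling_pos (d + 1) k hk.1 (by omega)
      calc higherBell m k * stirling (d + 2) k ≤ higherBell m k * Cn :=
            Nat.mul_le_mul_left _ hs1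
        _ ≤ Cn * (higherBell m k * stirling (d + 1) k) := by
            rw [mul_comm]
            exact Nat.mul_le_mul_left _ (Nat.le_mul_of_pos_right _ hs2)
    set G : Polynomial ℚ := Polynomial.C (Cn : ℚ) * E - D with hGdef
    have hDnonneg : ∀ m : ℕ, 0 ≤ D.eval (m : ℚ) := by
      intro m; rw [hD m]; positivity
    have hGnonneg : ∀ m : ℕ, 0 ≤ G.eval (m : ℚ) := by
      intro m
      have : G.eval (m : ℚ) = (Cn : ℚ) * E.eval (m : ℚ) - D.eval (m : ℚ) := by simp [hGdef]
      rw [this, hD m, hE m, sub_nonneg, ← Nat.cast_mul]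
      exact_mod_cast hbound m
    -- coefficient computations
    have hXadd : (Polynomial.X + 1 : Polynomial ℚ).natDegree = 1 := by
      simpa using Polynomial.natDegree_X_add_C (1 : ℚ)
    have hcompP : (P.comp (Polynomial.X + 1)).natDegree = d + 1 := by
      rw [Polynomial.natDegree_comp, hXadd, hPd', mul_one]
    have hcompQ : (Q.comp (Polynomial.X + 1)).natDegree = d := by
      rw [Polynomial.natDegree_comp, hXadd, hQd', mul_one]
    have hQhigh : Q.coeff (d + 1) = 0 := Polynomial.coeff_eq_zero_of_natDegree_lt (by omega)
    have hPcomp_d : (P.comp (Polynomial.X + 1)).coeff d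
        = P.coeff d + ((d : ℚ) + 1) * P.coeff (d + 1) := by
      rw [coeff_comp_X_add_one, hPd', Finset.sum_range_succ, Finset.sum_range_succ,
        Nat.choose_succ_self_right, Nat.choose_self]
      have hz : ∑ e ∈ Finset.range d, P.coeff e * (e.choose d : ℚ) = 0 :=
        Finset.sum_eq_zero fun e he => by
          rw [Nat.choose_eq_zero_of_lt (Finset.mem_range.mp he)]; simp
      rw [hz]; push_cast; ring
    have hPcomp_d1 : (P.comp (Polynomial.X + 1)).coeff (d + 1) = P.coeff (d + 1) := by
      rw [coeff_comp_X_add_one, hPd', Finset.sum_range_succ, Nat.choose_self]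
      have hz : ∑ e ∈ Finset.range (d + 1), P.coeff e * (e.choose (d + 1) : ℚ) = 0 :=
        Finset.sum_eq_zero fun e he => by
          rw [Nat.choose_eq_zero_of_lt (Finset.mem_range.mp he)]; simp
      rw [hz]; simp
    have hQcomp_d : (Q.comp (Polynomial.X + 1)).coeff d = Q.coeff d := by
      rw [coeff_comp_X_add_one, hQd', Finset.sum_range_succ, Nat.choose_self]
      have hz : ∑ e ∈ Finset.range d, Q.coeff e * (e.choose d : ℚ) = 0 :=
        Finset.sum_eq_zero fun e he => by
          rw [Nat.choose_eq_zero_of_lt (Finset.mem_range.mp he)]; simp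
      rw [hz]; simp
    have hD1 : D.coeff (d + 1) = 0 := by
      simp [hDdef, Polynomial.coeff_sub, Polynomial.coeff_C_mul, hPcomp_d1, hQhigh]
    have hD0 : D.coeff d = ((d : ℚ) + 1) * P.coeff (d + 1) - c * Q.coeff d := by
      simp only [hDdef, Polynomial.coeff_sub, Polynomial.coeff_C_mul, hPcomp_d]
      ring
    have hE0 : E.coeff d = 0 := by
      simp [hEdef, Polynomial.coeff_sub, hQcomp_d]
    -- degree bounds
    have hDdeg : D.natDegree ≤ d := by
      rw [Polynomial.natDegree_le_iff_coeff_eq_zero]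
      intro N hN
      rcases eq_or_lt_of_le (show d + 1 ≤ N by omega) with heq | hlt
      · rw [← heq]; exact hD1
      · have e1 : (P.comp (Polynomial.X + 1)).coeff N = 0 :=
          Polynomial.coeff_eq_zero_of_natDegree_lt (by omega)
        have e2 : P.coeff N = 0 := Polynomial.coeff_eq_zero_of_natDegree_lt (by omega)
        have e3 : Q.coeff N = 0 := Polynomial.coeff_eq_zero_of_natDegree_lt (by omega)
        simp [hDdef, Polynomial.coeff_sub, Polynomial.coeff_C_mul, e1, e2, e3]
    have hEdeg : E.natDegree ≤ d := by
      refine le_trans (Polynomial.natDegree_sub_le _ _) ?_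
      simp [hcompQ, hQd']
    have hGdeg : G.natDegree ≤ d := by
      refine le_trans (Polynomial.natDegree_sub_le _ _) ?_
      refine max_le (le_trans (Polynomial.natDegree_C_mul_le _ _) hEdeg) hDdeg
    have hGd : G.coeff d = -(D.coeff d) := by
      simp [hGdef, Polynomial.coeff_sub, Polynomial.coeff_C_mul, hE0]
    -- the key vanishing
    have hkey : D.coeff d = 0 := by
      by_contra hne
      have hDdegEq : D.natDegree = d :=
        le_antisymm hDdeg (Polynomial.le_natDegree_of_ne_zero hne)
      have h1 : 0 ≤ D.coeff d := by
        have := leadingCoeff_nonneg_of_nat D hDnonneg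
        rwa [Polynomial.leadingCoeff, hDdegEq] at this
      have hGne : G.coeff d ≠ 0 := by rw [hGd]; simpa using hne
      have hGdegEq : G.natDegree = d :=
        le_antisymm hGdeg (Polynomial.le_natDegree_of_ne_zero hGne)
      have h2 : 0 ≤ G.coeff d := by
        have := leadingCoeff_nonneg_of_nat G hGnonneg
        rwa [Polynomial.leadingCoeff, hGdegEq] at this
      rw [hGd] at h2
      exact hne (le_antisymm (by linarith) h1)
    have heq : ((d : ℚ) + 1) * P.coeff (d + 1) = c * Q.coeff d := by
      rw [hD0] at hkey; linarith
    have hcval : c = ((d : ℚ) + 2) * ((d : ℚ) + 1) / 2 := by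
      rw [hc, stirling_succ_self (d + 1), Nat.cast_choose_two]
      push_cast; ring
    have hd1 : ((d : ℚ) + 1) ≠ 0 := by positivity
    rw [Polynomial.leadingCoeff, Polynomial.leadingCoeff, hPd', hQd']
    apply mul_left_cancel₀ hd1
    rw [heq, hcval]
    push_cast
    ring
  · intro P hP
    have h1 : ∀ m : ℕ, (P - 1).eval (m : ℚ) = 0 := by
      intro m
      simp [← hP m, higherBell_one m]
    have h2 : P - 1 = 0 := by
      apply Polynomial.eq_zero_of_infinite_isRoot
      exact Set.infinite_of_injective_forall_mem (f := fun m : ℕ => (m : ℚ))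
        Nat.cast_injective (fun m => h1 m)
    have h3 : P = 1 := by linear_combination h2
    rw [h3, Polynomial.leadingCoeff_one]
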